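/- Let (Φ_k)_{k≥1} be biholomorphic maps Φ_k(z,ζ) = (z, φ_k(z,ζ)) of U_k × ℂⁿ with Φ_k(z,0) = (z,0), where U_k are decreasing neighbourhoods of a compact set L ⊆ ℂᴺ, B ⊆ ℂⁿ a closed ball centred at 0, and Φᵏ = Φ_k ∘ ⋯ ∘ Φ₁. If each Φ_k approximates the identity sufficiently closely on L × kB, then the limit Φ = lim Φᵏ exists uniformly on compact subsets of Ω = ⋃_k (Φᵏ)⁻¹(L × kB), and for each z ∈ L the map Φ(z, ·) sends the fibre Ω_z = {ζ : (z,ζ) ∈ Ω} biholomorphically onto ℂⁿ. -/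

import Mathlib

noncomputable section
open Set Metric MvPolynomial

/-- The polynomially convex hull of a set in `ℂⁿ`. -/
def polyHull {n : ℕ} (K : Set (EuclideanSpace ℂ (Fin n))) : Set (EuclideanSpace ℂ (Fin n)) :=
  {z | ∀ p : MvPolynomial (Fin n) ℂ,
    ‖eval (fun i => z i) p‖ ≤ sSup ((fun w => ‖eval (fun i => w i) p‖) '' K)}

/-- A compact set in `ℂⁿ` is polynomially convex if it equals its polynomial hull. -/
def IsPolyConvex {n : ℕ} (K : Set (EuclideanSpace ℂ (Fin n))) : Prop :=
  polyHull K = K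

/-- Polynomial hull for subsets of a product `ℂᴺ × ℂⁿ ≅ ℂ^{N+n}`, using polynomials in the
`N + n` coordinates. -/
def polyHull2 {N n : ℕ} (S : Set (EuclideanSpace ℂ (Fin N) × EuclideanSpace ℂ (Fin n))) :
    Set (EuclideanSpace ℂ (Fin N) × EuclideanSpace ℂ (Fin n)) :=
  {z | ∀ p : MvPolynomial (Fin N ⊕ Fin n) ℂ,
    ‖eval (Sum.elim (fun i => z.1 i) (fun j => z.2 j)) p‖ ≤
      sSup ((fun w => ‖eval (Sum.elim (fun i => w.1 i) (fun j => w.2 j)) p‖) '' S)}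

def IsPolyConvex2 {N n : ℕ} (S : Set (EuclideanSpace ℂ (Fin N) × EuclideanSpace ℂ (Fin n))) :
    Prop :=
  polyHull2 S = S

/-!
Along the orbit of a point, the `k`-th map moves it by at most `ε_k` as long as it lies in
`L × kB`; since `∑_{j > k} ε_j ≤ ε_k < r`, an orbit that enters `L × kB` stays in `L × jB` for all
`j ≥ k`, so the compositions converge, uniformly near each point of `Ω`. On a fibre, the Cauchy
estimates make `φ_{k+1}(z, ·) - id` a `2 ε_{k+1} / r`-Lipschitz map on `kB`; these constants sum
to at most `1/2`, so from the time two orbits are both inside the balls their distance is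
distorted by a factor between `1/2` and `2`. This gives injectivity of the limit, and
surjectivity by pulling a point `w` back along the inverse maps, which keep it inside the balls
by a contraction argument. Holomorphy of the limit is Weierstrass' theorem.
-/

open Filter Topology Function

/-- The tolerances `ε_k` halve at each step, so `∑_{j > k} ε_j = ε_k ≤ r / 4`: an orbit drifts by
less than `r` after entering a ball. -/
def pushOutTol (r : ℝ) (k : ℕ) : ℝ := r / 2 ^ (k + 2)

section Tolerance

variable {r : ℝ}

theorem pushOutTol_pos (hr : 0 < r) (k : ℕ) : 0 < pushOutTol r k := by
  unfold pushOutTol; positivity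

theorem pushOutTol_nonneg (hr : 0 ≤ r) (k : ℕ) : 0 ≤ pushOutTol r k := by
  unfold pushOutTol; positivity

theorem two_mul_pushOutTol_succ (r : ℝ) (k : ℕ) : 2 * pushOutTol r (k + 1) = pushOutTol r k := by
  unfold pushOutTol
  rw [show k + 1 + 2 = k + 2 + 1 by ring, pow_succ']
  field_simp

theorem pushOutTol_le (hr : 0 ≤ r) (k : ℕ) : pushOutTol r k ≤ r / 4 := by
  unfold pushOutTol
  gcongr
  calc (4 : ℝ) = 2 ^ 2 := by norm_num
    _ ≤ 2 ^ (k + 2) := pow_le_pow_right₀ one_le_two (by omega)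

theorem pushOutTol_add (r : ℝ) (k i : ℕ) :
    pushOutTol r (k + i) = pushOutTol r k * (1 / 2) ^ i := by
  unfold pushOutTol
  rw [show k + i + 2 = k + 2 + i by ring, pow_add, one_div_pow]
  field_simp

theorem tendsto_pushOutTol (r : ℝ) : Tendsto (pushOutTol r) atTop (𝓝 0) := by
  have h := (tendsto_pow_atTop_nhds_zero_of_lt_one (by norm_num : (0 : ℝ) ≤ 1 / 2)
    (by norm_num : (1 : ℝ) / 2 < 1)).const_mul (pushOutTol r 0)
  rw [mul_zero] at h
  refine h.congr fun i => ?_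
  rw [← pushOutTol_add, zero_add]

end Tolerance

theorem half_le_and_le_two_mul_of_abs_sub_le {c d : ℕ → ℝ} {K M : ℕ} (hKM : K ≤ M)
    (hc : ∀ m, 0 ≤ c m) (hc_succ : ∀ m, 2 * c (m + 1) ≤ c m) (hcK : c K ≤ 1 / 2)
    (hdK : 0 ≤ d K) (hstep : ∀ m, K ≤ m → m < M → |d (m + 1) - d m| ≤ c (m + 1) * d m) :
    d K / 2 ≤ d M ∧ d M ≤ 2 * d K := by
  -- Since `∑_{K < j ≤ M} c j ≤ c K - c M`, the factors `1 ± c j` accumulate as follows.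
  suffices key : (1 - (c K - c M)) * d K ≤ d M ∧ d M ≤ (1 + 2 * (c K - c M)) * d K by
    constructor <;> nlinarith [hc M, key.1, key.2]
  induction M, hKM using Nat.le_induction with
  | base => simp
  | succ m hKm ih =>
    obtain ⟨ihl, ihu⟩ := ih fun j hKj hjm => hstep j hKj (by omega)
    have hs := abs_le.1 (hstep m hKm (by omega))
    have hcm := hc_succ m
    have hcKm : c m ≤ c K :=
      antitone_nat_of_succ_le (fun j => by linarith [hc j, hc (j + 1), hc_succ j]) hKm
    have hc' := hc (m + 1)
    constructor
    · nlinarith [mul_le_mul_of_nonneg_left ihl (by linarith : 0 ≤ 1 - c (m + 1))]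
    · nlinarith [mul_le_mul_of_nonneg_left ihu (by linarith : 0 ≤ 1 + c (m + 1))]

theorem mapsTo_closedBall_two_mul {α F : Type*} [SeminormedAddCommGroup F] {h : α → F}
    {s : Set α} {η : ℝ} (hη : ∀ u ∈ s, ‖h u‖ ≤ η) {c : α} (hc : c ∈ s) :
    MapsTo h s (closedBall (h c) (2 * η)) := fun u hu => by
  rw [mem_closedBall, dist_eq_norm]
  linarith [norm_sub_le (h u) (h c), hη u hu, hη c hc]

theorem exists_add_eq_of_lipschitzOnWith {E : Type*} [NormedAddCommGroup E] [CompleteSpace E]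
    {h : E → E} {K : NNReal} {R η : ℝ} (hK : K < 1) (hR : 0 ≤ R)
    (hlip : LipschitzOnWith K h (closedBall 0 R)) (hη : ∀ u ∈ closedBall (0 : E) R, ‖h u‖ ≤ η)
    {w : E} (hw : ‖w‖ + η ≤ R) : ∃ u ∈ closedBall (0 : E) R, u + h u = w := by
  have hmaps : MapsTo (fun u => w - h u) (closedBall 0 R) (closedBall 0 R) := fun u hu => by
    rw [mem_closedBall_zero_iff]
    linarith [norm_sub_le w (h u), hη u hu]
  have hlip' : LipschitzOnWith K (fun u => w - h u) (closedBall 0 R) :=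
    LipschitzOnWith.of_dist_le_mul fun a ha b hb => by
      rw [dist_sub_left]
      exact hlip.dist_le_mul a ha b hb
  obtain ⟨u, hu, hfix, -⟩ := ContractingWith.exists_fixedPoint' isClosed_closedBall.isComplete
    hmaps ⟨hK, hlip'.mapsToRestrict hmaps⟩ (mem_closedBall_self hR) (edist_ne_top _ _)
  exact ⟨u, hu, (sub_eq_iff_eq_add.1 hfix).symm⟩

section ComplexAnalysis

variable {E F : Type*} [NormedAddCommGroup E] [NormedSpace ℂ E] [NormedAddCommGroup F]
  [NormedSpace ℂ F]

theorem norm_fderiv_le_of_norm_le {h : E → F} {c : E} {δ η : ℝ} (hδ : 0 < δ)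
    (hd : DifferentiableOn ℂ h (ball c δ)) (hη : ∀ u ∈ ball c δ, ‖h u‖ ≤ η) :
    ‖fderiv ℂ h c‖ ≤ 2 * η / δ :=
  Complex.norm_fderiv_le_div_of_mapsTo_ball hd
    (mapsTo_closedBall_two_mul hη (mem_ball_self hδ)) hδ

theorem dist_le_two_mul_div_mul_dist_of_norm_le {h : E → F} {R ρ η : ℝ} (hρ : 0 < ρ)
    (hd : DifferentiableOn ℂ h (ball 0 (R + ρ))) (hη : ∀ u ∈ ball (0 : E) (R + ρ), ‖h u‖ ≤ η)
    {a b : E} (ha : ‖a‖ ≤ R) (hb : ‖b‖ ≤ R) : dist (h a) (h b) ≤ 2 * η / ρ * dist a b := by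
  have hball : ball a ρ ⊆ ball 0 (R + ρ) := fun u hu => by
    rw [mem_ball_zero_iff]
    linarith [norm_le_norm_add_norm_sub' u a, (dist_eq_norm u a) ▸ mem_ball.1 hu]
  rcases lt_or_ge (dist a b) ρ with hab | hab
  · rw [dist_comm (h a), dist_comm a]
    exact Complex.dist_le_div_mul_dist_of_mapsTo_ball (hd.mono hball)
      ((mapsTo_closedBall_two_mul hη (hball (mem_ball_self hρ))).mono_left hball)
      (mem_ball'.2 hab)
  · have haη := hη a (hball (mem_ball_self hρ))
    have hbη := hη b (by rw [mem_ball_zero_iff]; linarith)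
    calc dist (h a) (h b) ≤ ‖h a‖ + ‖h b‖ := dist_le_norm_add_norm _ _
      _ ≤ 2 * η / ρ * ρ := by rw [div_mul_cancel₀ _ hρ.ne']; linarith
      _ ≤ 2 * η / ρ * dist a b := by
        gcongr
        exact div_nonneg (by linarith [norm_nonneg (h a)]) hρ.le

theorem TendstoLocallyUniformlyOn.differentiableOn_of_locallyCompactSpace [CompleteSpace F]
    [LocallyCompactSpace E] {ι : Type*} {l : Filter ι} [l.NeBot] {f : ι → E → F} {g : E → F}
    {U : Set E} (hfg : TendstoLocallyUniformlyOn f g l U)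
    (hf : ∀ i, DifferentiableOn ℂ (f i) U) (hU : IsOpen U) : DifferentiableOn ℂ g U := by
  intro x hx
  obtain ⟨K, hKx, hKU, hK⟩ := LocallyCompactSpace.local_compact_nhds x U (hU.mem_nhds hx)
  have hfK := (tendstoLocallyUniformlyOn_iff_forall_isCompact hU).1 hfg K hKU hK
  obtain ⟨δ, hδ, hδK⟩ := Metric.mem_nhds_iff.1 hKx
  have hfd : ∀ i, ∀ y ∈ ball x δ, DifferentiableAt ℂ (f i) y := fun i y hy =>
    (hf i).differentiableAt (hU.mem_nhds (hKU (hδK hy)))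
  have hhalf : ∀ y ∈ ball x (δ / 2), ball y (δ / 2) ⊆ ball x δ := fun y hy =>
    ball_subset_ball' (by linarith [mem_ball.1 hy])
  -- Cauchy estimates turn uniform convergence of `f` into uniform convergence of `fderiv f`.
  have hcauchy : UniformCauchySeqOn (fun i => fderiv ℂ (f i)) l (ball x (δ / 2)) := by
    intro u hu
    obtain ⟨η, hη, hηu⟩ := Metric.mem_uniformity_dist.1 hu
    filter_upwards [hfK.uniformCauchySeqOn _ (Metric.dist_mem_uniformity
      (by positivity : 0 < η * δ / 8))] with i hi y hy
    have hdy := fun j => hfd j y (hhalf y hy (mem_ball_self (half_pos hδ)))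
    apply hηu
    rw [dist_eq_norm, ← fderiv_sub (hdy i.1) (hdy i.2)]
    calc ‖fderiv ℂ (f i.1 - f i.2) y‖ ≤ 2 * (η * δ / 8) / (δ / 2) :=
          norm_fderiv_le_of_norm_le (half_pos hδ)
            (fun v hv => ((hfd i.1 v (hhalf y hy hv)).sub
              (hfd i.2 v (hhalf y hy hv))).differentiableWithinAt)
            (fun v hv => by
              rw [Pi.sub_apply, ← dist_eq_norm]
              exact (hi v (hδK (hhalf y hy hv))).le)
      _ < η := by field_simp; linarith
  choose! g' hg' using fun y (hy : y ∈ ball x (δ / 2)) =>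
    cauchy_map_iff_exists_tendsto.1 (hcauchy.cauchy_map hy)
  exact (hasFDerivAt_of_tendstoUniformlyOn isOpen_ball
    (hcauchy.tendstoUniformlyOn_of_tendsto hg')
    (fun i y hy => (hfd i y (ball_subset_ball (half_le_self hδ.le) hy)).hasFDerivAt)
    (fun y hy => hfK.tendsto_at (hδK (ball_subset_ball (half_le_self hδ.le) hy)))
    (mem_ball_self (half_pos hδ))).differentiableAt.differentiableWithinAt

end ComplexAnalysis

def IsPushOutOrbit {E : Type*} [NormedAddCommGroup E] (r : ℝ) (x : ℕ → E) : Prop :=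
  ∀ m : ℕ, ‖x m‖ ≤ (m + 1 : ℕ) * r → dist (x (m + 1)) (x m) ≤ pushOutTol r (m + 1)

namespace IsPushOutOrbit

variable {E : Type*} [NormedAddCommGroup E] {r : ℝ} {x : ℕ → E} {k m : ℕ}

theorem norm_le_add (hx : IsPushOutOrbit r x) (hr : 0 ≤ r) (hk : ‖x k‖ ≤ k * r) (hkm : k ≤ m) :
    ‖x m‖ ≤ k * r + (pushOutTol r k - pushOutTol r m) := by
  induction m, hkm using Nat.le_induction with
  | base => simpa using hk
  | succ m hkm ih =>
    have hkm' : (k : ℝ) ≤ m := by exact_mod_cast hkm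
    have hstep := hx m (by
      push_cast
      nlinarith [pushOutTol_le hr k, pushOutTol_nonneg hr m])
    have := norm_le_norm_add_norm_sub' (x (m + 1)) (x m)
    rw [← dist_eq_norm] at this
    have := two_mul_pushOutTol_succ r m
    linarith

theorem norm_le_mul (hx : IsPushOutOrbit r x) (hr : 0 ≤ r) (hk : ‖x k‖ ≤ k * r) (hkm : k ≤ m) :
    ‖x m‖ ≤ m * r := by
  obtain rfl | hkm' := hkm.eq_or_lt
  · exact hk
  have : (k : ℝ) + 1 ≤ m := by exact_mod_cast hkm'
  nlinarith [hx.norm_le_add hr hk hkm, pushOutTol_le hr k, pushOutTol_nonneg hr m]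

theorem norm_succ_lt (hx : IsPushOutOrbit r x) (hr : 0 < r) (hk : ‖x k‖ ≤ k * r) :
    ‖x (k + 1)‖ < (k + 1 : ℕ) * r := by
  have := hx.norm_le_add hr.le hk k.le_succ
  have := two_mul_pushOutTol_succ r k
  have := pushOutTol_le hr.le (k + 1)
  push_cast
  linarith

theorem dist_le (hx : IsPushOutOrbit r x) (hr : 0 ≤ r) (hk : ‖x k‖ ≤ k * r) (hkm : k ≤ m)
    {m' : ℕ} (hmm' : m ≤ m') : dist (x m') (x m) ≤ pushOutTol r m - pushOutTol r m' := by
  induction m', hmm' using Nat.le_induction with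
  | base => simp
  | succ m' hmm' ih =>
    have hstep := hx m' (by
      have := hx.norm_le_mul hr hk (hkm.trans hmm')
      push_cast
      linarith)
    have := dist_triangle (x (m' + 1)) (x m') (x m)
    have := two_mul_pushOutTol_succ r m'
    linarith

theorem cauchySeq (hx : IsPushOutOrbit r x) (hr : 0 ≤ r) (hk : ‖x k‖ ≤ k * r) :
    CauchySeq x := by
  refine Metric.cauchySeq_iff'.2 fun ε hε => ?_
  obtain ⟨N, hN⟩ := eventually_atTop.1 ((tendsto_pushOutTol r).eventually (gt_mem_nhds hε))
  refine ⟨max k N, fun m hm => ?_⟩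
  have := hx.dist_le hr hk (le_max_left k N) hm
  have := hN (max k N) (le_max_right k N)
  linarith [pushOutTol_nonneg hr m]

theorem tendsto_limUnder [CompleteSpace E] (hx : IsPushOutOrbit r x) (hr : 0 ≤ r)
    (hk : ‖x k‖ ≤ k * r) : Tendsto x atTop (𝓝 (limUnder atTop x)) :=
  (hx.cauchySeq hr hk).tendsto_limUnder

theorem dist_limUnder_le [CompleteSpace E] (hx : IsPushOutOrbit r x) (hr : 0 ≤ r)
    (hk : ‖x k‖ ≤ k * r) (hkm : k ≤ m) : dist (limUnder atTop x) (x m) ≤ pushOutTol r m := by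
  refine le_of_tendsto ((hx.tendsto_limUnder hr hk).dist tendsto_const_nhds) ?_
  filter_upwards [eventually_ge_atTop m] with m' hm'
  linarith [hx.dist_le hr hk hkm hm', pushOutTol_nonneg hr m']

end IsPushOutOrbit

section Domain

variable {P E : Type*} [TopologicalSpace P] [NormedAddCommGroup E] {r : ℝ} {F : ℕ → P → E}
  {S : Set P}

def pushOutDomain (F : ℕ → P → E) (r : ℝ) : Set P := {p | ∃ k, 1 ≤ k ∧ ‖F k p‖ ≤ k * r}

theorem IsPushOutOrbit.eventually_norm_le {p : P} {k : ℕ} (hr : 0 < r)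
    (hp : IsPushOutOrbit r (F · p)) (hk : ‖F k p‖ ≤ k * r)
    (hF : ContinuousWithinAt (F (k + 1)) S p) :
    ∀ᶠ q in 𝓝[S] p, ‖F (k + 1) q‖ ≤ (k + 1 : ℕ) * r :=
  (hF.norm.eventually (gt_mem_nhds (hp.norm_succ_lt hr hk))).mono fun _ => le_of_lt

theorem isOpen_pushOutDomain (hr : 0 < r) (hF : ∀ m, Continuous (F m))
    (horb : ∀ p, IsPushOutOrbit r (F · p)) : IsOpen (pushOutDomain F r) := by
  refine isOpen_iff_mem_nhds.2 fun p ⟨k, _, hk⟩ => ?_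
  have := (horb p).eventually_norm_le hr hk (hF (k + 1)).continuousWithinAt (S := univ)
  rw [nhdsWithin_univ] at this
  exact this.mono fun q hq => ⟨k + 1, k.succ_pos, hq⟩

theorem tendstoLocallyUniformlyOn_pushOutDomain [CompleteSpace E] (hr : 0 < r)
    (hF : ∀ m, ContinuousOn (F m) S) (horb : ∀ p ∈ S, IsPushOutOrbit r (F · p)) :
    TendstoLocallyUniformlyOn F (fun p => limUnder atTop (F · p)) atTop
      (S ∩ pushOutDomain F r) := by
  refine tendstoLocallyUniformlyOn_of_forall_exists_nhds fun p ⟨hpS, k, _, hk⟩ => ?_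
  set t := {q | q ∈ S ∧ ‖F (k + 1) q‖ ≤ (k + 1 : ℕ) * r}
  have ht : t ∈ 𝓝[S] p := inter_mem self_mem_nhdsWithin
    ((horb p hpS).eventually_norm_le hr hk (hF (k + 1) p hpS))
  refine ⟨t, nhdsWithin_mono p inter_subset_left ht,
    Metric.tendstoUniformlyOn_iff.2 fun ε hε => ?_⟩
  filter_upwards [eventually_ge_atTop (k + 1),
    (tendsto_pushOutTol r).eventually (gt_mem_nhds hε)] with m hm hτ q ⟨hqS, hq⟩
  exact ((horb q hqS).dist_limUnder_le hr.le hq hm).trans_lt hτ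

end Domain

/-- One fibre of the construction: `ψ j = φ_j(z, ·)` and `g m = ψ m ∘ ⋯ ∘ ψ 1`. -/
structure IsPushOutSequence {E : Type*} [NormedAddCommGroup E] [NormedSpace ℂ E]
    (ψ g : ℕ → E → E) (r : ℝ) : Prop where
  pos : 0 < r
  differentiable : ∀ j, Differentiable ℂ (ψ j)
  bijective : ∀ j, Bijective (ψ j)
  dist_le : ∀ j : ℕ, 1 ≤ j → ∀ a : E, ‖a‖ ≤ j * r → dist (ψ j a) a ≤ pushOutTol r j
  comp_zero : ∀ ζ, g 0 ζ = ζ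
  comp_succ : ∀ m ζ, g (m + 1) ζ = ψ (m + 1) (g m ζ)

namespace IsPushOutSequence

variable {E : Type*} [NormedAddCommGroup E] [NormedSpace ℂ E] {ψ g : ℕ → E → E} {r : ℝ}

theorem comp_zero_eq (h : IsPushOutSequence ψ g r) : g 0 = id :=
  funext h.comp_zero

theorem comp_succ_eq (h : IsPushOutSequence ψ g r) (m : ℕ) : g (m + 1) = ψ (m + 1) ∘ g m :=
  funext (h.comp_succ m)

theorem bijective_comp (h : IsPushOutSequence ψ g r) (m : ℕ) : Bijective (g m) := by
  induction m with
  | zero => exact h.comp_zero_eq ▸ bijective_id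
  | succ m ih => exact h.comp_succ_eq m ▸ (h.bijective (m + 1)).comp ih

theorem differentiable_comp (h : IsPushOutSequence ψ g r) (m : ℕ) :
    Differentiable ℂ (g m) := by
  induction m with
  | zero => exact h.comp_zero_eq ▸ differentiable_id
  | succ m ih => exact h.comp_succ_eq m ▸ (h.differentiable (m + 1)).comp ih

theorem isPushOutOrbit (h : IsPushOutSequence ψ g r) (ζ : E) : IsPushOutOrbit r (g · ζ) :=
  fun m hm => by simpa only [h.comp_succ] using h.dist_le (m + 1) m.succ_pos _ hm

theorem tendsto_limUnder [CompleteSpace E] (h : IsPushOutSequence ψ g r) {ζ : E} {k : ℕ}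
    (hk : ‖g k ζ‖ ≤ k * r) : Tendsto (g · ζ) atTop (𝓝 (limUnder atTop (g · ζ))) :=
  (h.isPushOutOrbit ζ).tendsto_limUnder h.pos.le hk

theorem dist_sub_le (h : IsPushOutSequence ψ g r) {j : ℕ} {a b : E} (ha : ‖a‖ ≤ j * r)
    (hb : ‖b‖ ≤ j * r) :
    dist (ψ (j + 1) a - a) (ψ (j + 1) b - b) ≤ 2 * pushOutTol r (j + 1) / r * dist a b :=
  dist_le_two_mul_div_mul_dist_of_norm_le (h := fun u => ψ (j + 1) u - u) h.pos
    ((h.differentiable (j + 1)).sub differentiable_fun_id).differentiableOn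
    (fun u hu => by
      rw [← dist_eq_norm]
      refine h.dist_le (j + 1) j.succ_pos u ?_
      push_cast
      linarith [mem_ball_zero_iff.1 hu])
    ha hb

theorem dist_comp_bounds (h : IsPushOutSequence ψ g r) {ζ ζ' : E} {K M : ℕ} (hKM : K ≤ M)
    (hball : ∀ j, K ≤ j → j < M → ‖g j ζ‖ ≤ j * r ∧ ‖g j ζ'‖ ≤ j * r) :
    dist (g K ζ) (g K ζ') / 2 ≤ dist (g M ζ) (g M ζ') ∧
      dist (g M ζ) (g M ζ') ≤ 2 * dist (g K ζ) (g K ζ') := by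
  refine half_le_and_le_two_mul_of_abs_sub_le (c := fun m => 2 * pushOutTol r m / r)
    (d := fun m => dist (g m ζ) (g m ζ')) hKM
    (fun m => div_nonneg (by linarith [pushOutTol_nonneg h.pos.le m]) h.pos.le)
    (fun m => le_of_eq (by rw [← two_mul_pushOutTol_succ r m]; ring))
    (by rw [div_le_iff₀ h.pos]; linarith [pushOutTol_le h.pos.le K]) dist_nonneg
    fun m hKm hmM => ?_
  obtain ⟨ha, hb⟩ := hball m hKm hmM
  rw [h.comp_succ, h.comp_succ, dist_eq_norm, dist_eq_norm]
  refine (abs_norm_sub_norm_le _ _).trans ?_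
  rw [← dist_eq_norm (g m ζ), show ψ (m + 1) (g m ζ) - ψ (m + 1) (g m ζ') - (g m ζ - g m ζ') =
    (ψ (m + 1) (g m ζ) - g m ζ) - (ψ (m + 1) (g m ζ') - g m ζ') by abel, ← dist_eq_norm]
  exact h.dist_sub_le ha hb

theorem norm_le_of_apply_eq [CompleteSpace E] (h : IsPushOutSequence ψ g r) {j : ℕ} {a v : E}
    (hv : ‖v‖ + pushOutTol r (j + 1) ≤ j * r) (ha : ψ (j + 1) a = v) :
    ‖a‖ ≤ ‖v‖ + pushOutTol r (j + 1) := by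
  have hball : ∀ u : E, ‖u‖ ≤ j * r → ‖u‖ ≤ (j + 1 : ℕ) * r := fun u hu => by
    push_cast
    linarith [h.pos]
  have hlip : LipschitzOnWith (1 / 2) (fun u => ψ (j + 1) u - u) (closedBall 0 (j * r)) :=
    LipschitzOnWith.of_dist_le_mul fun u hu w hw => by
      refine (h.dist_sub_le (mem_closedBall_zero_iff.1 hu)
        (mem_closedBall_zero_iff.1 hw)).trans ?_
      gcongr
      rw [div_le_iff₀ h.pos]
      push_cast
      linarith [pushOutTol_le h.pos.le (j + 1)]
  -- `v` has a preimage in the ball `j B`, which must be `a` since `ψ (j + 1)` is injective.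
  obtain ⟨u, hu, hfix⟩ := exists_add_eq_of_lipschitzOnWith (by norm_num)
    (mul_nonneg j.cast_nonneg h.pos.le) hlip (fun u hu => by
      rw [← dist_eq_norm]
      exact h.dist_le (j + 1) j.succ_pos u (hball u (mem_closedBall_zero_iff.1 hu))) hv
  rw [add_sub_cancel] at hfix
  obtain rfl : a = u := (h.bijective (j + 1)).1 (ha.trans hfix.symm)
  have := h.dist_le (j + 1) j.succ_pos a (hball a (mem_closedBall_zero_iff.1 hu))
  rw [ha] at this
  linarith [norm_le_norm_add_norm_sub' a v, dist_eq_norm v a, norm_sub_rev v a]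

theorem norm_comp_le_of_comp_eq [CompleteSpace E] (h : IsPushOutSequence ψ g r) {w ζ : E}
    {k m : ℕ} (hk : ‖w‖ + r ≤ k * r) (hζ : g m ζ = w) {j : ℕ} (hkj : k ≤ j) (hjm : j ≤ m) :
    ‖g j ζ‖ ≤ ‖w‖ + (pushOutTol r j - pushOutTol r m) := by
  refine Nat.decreasingInduction
    (motive := fun j _ => k ≤ j → ‖g j ζ‖ ≤ ‖w‖ + (pushOutTol r j - pushOutTol r m))
    (fun j _ ih hkj => ?_) (fun _ => by simp [hζ]) hjm hkj
  have ih := ih (by omega)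
  have hkj' : (k : ℝ) ≤ j := by exact_mod_cast hkj
  have htol := two_mul_pushOutTol_succ r j
  have := h.norm_le_of_apply_eq (j := j) (v := g (j + 1) ζ) (by
    nlinarith [pushOutTol_le h.pos.le j, pushOutTol_nonneg h.pos.le m, h.pos])
    (h.comp_succ j ζ).symm
  linarith

theorem norm_comp_le_mul_of_comp_eq [CompleteSpace E] (h : IsPushOutSequence ψ g r) {w ζ : E}
    {k m : ℕ} (hk : ‖w‖ + r ≤ k * r) (hζ : g m ζ = w) {j : ℕ} (hkj : k ≤ j) (hjm : j ≤ m) :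
    ‖g j ζ‖ ≤ j * r := by
  have hkj' : (k : ℝ) ≤ j := by exact_mod_cast hkj
  nlinarith [h.norm_comp_le_of_comp_eq hk hζ hkj hjm, pushOutTol_le h.pos.le j,
    pushOutTol_nonneg h.pos.le m, h.pos]

theorem dist_comp_le_of_comp_eq [CompleteSpace E] (h : IsPushOutSequence ψ g r) {w ζ ζ' : E}
    {k m : ℕ} (hk : ‖w‖ + r ≤ k * r) (hkm : k ≤ m) (hζ : g m ζ = w) (hζ' : g (m + 1) ζ' = w) :
    dist (g k ζ) (g k ζ') ≤ pushOutTol r m := by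
  have hbounds := (h.dist_comp_bounds hkm fun j hkj hjm =>
    ⟨h.norm_comp_le_mul_of_comp_eq hk hζ hkj hjm.le,
      h.norm_comp_le_mul_of_comp_eq hk hζ' hkj (by omega)⟩).1
  have hstep : dist (g m ζ) (g m ζ') ≤ pushOutTol r (m + 1) := by
    rw [hζ, ← hζ', h.comp_succ]
    refine h.dist_le (m + 1) m.succ_pos _ ?_
    have := h.norm_comp_le_mul_of_comp_eq hk hζ' hkm m.le_succ
    push_cast
    linarith [h.pos]
  linarith [two_mul_pushOutTol_succ r m]

theorem exists_mem_pushOutDomain_limUnder_eq [CompleteSpace E] (h : IsPushOutSequence ψ g r)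
    (w : E) : ∃ ζ ∈ pushOutDomain g r, limUnder atTop (g · ζ) = w := by
  obtain ⟨k, hk1, hk⟩ : ∃ k : ℕ, 1 ≤ k ∧ ‖w‖ + r ≤ k * r := by
    refine ⟨⌈‖w‖ / r⌉₊ + 1, by omega, ?_⟩
    have := (div_le_iff₀ h.pos).1 (Nat.le_ceil (‖w‖ / r))
    push_cast
    linarith
  -- With `g m (ζs m) = w`, the points `g k (ζs m)` converge to some `g k ζ`, and this `ζ` works.
  choose ζs hζs using fun m => (h.bijective_comp m).2 w
  have hball : ∀ m j, k ≤ j → j ≤ m → ‖g j (ζs m)‖ ≤ j * r := fun m j hkj hjm =>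
    h.norm_comp_le_mul_of_comp_eq hk (hζs m) hkj hjm
  obtain ⟨u, hu⟩ := cauchySeq_tendsto_of_complete <| cauchySeq_of_le_geometric (1 / 2)
    (pushOutTol r k) (by norm_num) fun i =>
      (h.dist_comp_le_of_comp_eq hk (k.le_add_right i) (hζs (k + i))
        (hζs (k + i + 1))).trans_eq (pushOutTol_add r k i)
  obtain ⟨ζ, rfl⟩ := (h.bijective_comp k).2 u
  have hζk : ‖g k ζ‖ ≤ k * r :=
    le_of_tendsto' hu.norm fun i => hball (k + i) k le_rfl (k.le_add_right i)
  refine ⟨ζ, ⟨k, hk1, hζk⟩, tendsto_nhds_unique (h.tendsto_limUnder hζk) ?_⟩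
  refine (tendsto_add_atTop_iff_nat k).1 <| tendsto_iff_dist_tendsto_zero.2 <|
    squeeze_zero (fun _ => dist_nonneg) (fun i => ?_)
      (by simpa using (tendsto_iff_dist_tendsto_zero.1 hu).const_mul 2)
  rw [add_comm i k, ← hζs (k + i), dist_comm (g k (ζs (k + i)))]
  exact (h.dist_comp_bounds (k.le_add_right i) fun j hkj hj =>
    ⟨(h.isPushOutOrbit ζ).norm_le_mul h.pos.le hζk hkj, hball _ j hkj hj.le⟩).2

theorem injOn_limUnder [CompleteSpace E] (h : IsPushOutSequence ψ g r) :
    InjOn (fun ζ => limUnder atTop (g · ζ)) (pushOutDomain g r) := by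
  rintro ζ ⟨k, -, hk⟩ ζ' ⟨k', -, hk'⟩ heq
  set K := max k k'
  have hball : ∀ j, K ≤ j → ‖g j ζ‖ ≤ j * r ∧ ‖g j ζ'‖ ≤ j * r := fun j hj =>
    ⟨(h.isPushOutOrbit ζ).norm_le_mul h.pos.le hk ((le_max_left k k').trans hj),
      (h.isPushOutOrbit ζ').norm_le_mul h.pos.le hk' ((le_max_right k k').trans hj)⟩
  have hlim : dist (g K ζ) (g K ζ') / 2 ≤ 0 := by
    have hdist := (h.tendsto_limUnder hk).dist (h.tendsto_limUnder hk')
    simp only at heq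
    rw [heq, dist_self] at hdist
    refine ge_of_tendsto hdist ?_
    filter_upwards [eventually_ge_atTop K] with m hm
    exact (h.dist_comp_bounds hm fun j hj _ => hball j hj).1
  exact (h.bijective_comp K).1 (dist_le_zero.1 (by linarith))

theorem image_limUnder [CompleteSpace E] (h : IsPushOutSequence ψ g r) :
    (fun ζ => limUnder atTop (g · ζ)) '' pushOutDomain g r = univ :=
  eq_univ_of_forall h.exists_mem_pushOutDomain_limUnder_eq

theorem differentiableOn_limUnder [CompleteSpace E] [LocallyCompactSpace E]
    (h : IsPushOutSequence ψ g r) :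
    DifferentiableOn ℂ (fun ζ => limUnder atTop (g · ζ)) (pushOutDomain g r) := by
  have hcont m := (h.differentiable_comp m).continuous
  have hconv := tendstoLocallyUniformlyOn_pushOutDomain (S := univ) h.pos
    (fun m => (hcont m).continuousOn) fun ζ _ => h.isPushOutOrbit ζ
  rw [univ_inter] at hconv
  exact hconv.differentiableOn_of_locallyCompactSpace
    (fun m => (h.differentiable_comp m).differentiableOn)
    (isOpen_pushOutDomain h.pos hcont h.isPushOutOrbit)

end IsPushOutSequence

/-- The data of the theorem: `Φ k` is the fibred map `Φ_k` of `U k × E` and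
`Ψ k = Φ_k ∘ ⋯ ∘ Φ_1` is the composition written `Φᵏ` in the statement. -/
structure IsParametricPushOut {X E : Type*} [NormedAddCommGroup X] [NormedSpace ℂ X]
    [NormedAddCommGroup E] [NormedSpace ℂ E] (L : Set X) (U : ℕ → Set X)
    (Φ Ψ : ℕ → X × E → X × E) (r : ℝ) : Prop where
  isOpen : ∀ k, IsOpen (U k)
  subset : ∀ k, L ⊆ U k
  fst_apply : ∀ k p, (Φ k p).1 = p.1
  differentiableOn : ∀ k, DifferentiableOn ℂ (Φ k) (U k ×ˢ univ)
  injOn : ∀ k, InjOn (Φ k) (U k ×ˢ univ)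
  image_eq : ∀ k, Φ k '' (U k ×ˢ univ) = U k ×ˢ univ
  comp_zero : Ψ 0 = id
  comp_succ : ∀ k, Ψ (k + 1) = Φ (k + 1) ∘ Ψ k
  dist_lt : ∀ k : ℕ, 1 ≤ k → ∀ p ∈ L ×ˢ closedBall (0 : E) (k * r),
    dist (Φ k p) p < pushOutTol r k

namespace IsParametricPushOut

variable {X E : Type*} [NormedAddCommGroup X] [NormedSpace ℂ X] [NormedAddCommGroup E]
  [NormedSpace ℂ E] {L : Set X} {U : ℕ → Set X} {Φ Ψ : ℕ → X × E → X × E} {r : ℝ}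

theorem fst_comp (h : IsParametricPushOut L U Φ Ψ r) (m : ℕ) (p : X × E) :
    (Ψ m p).1 = p.1 := by
  induction m with
  | zero => rw [h.comp_zero, id]
  | succ m ih => rw [h.comp_succ, comp_apply, h.fst_apply, ih]

theorem continuousOn_comp (h : IsParametricPushOut L U Φ Ψ r) (m : ℕ) :
    ContinuousOn (Ψ m) (L ×ˢ univ) := by
  induction m with
  | zero => exact h.comp_zero ▸ continuousOn_id
  | succ m ih =>
    rw [h.comp_succ]
    exact (h.differentiableOn (m + 1)).continuousOn.comp ih fun p hp =>
      ⟨h.subset (m + 1) ((h.fst_comp m p).symm ▸ hp.1), mem_univ _⟩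

theorem isPushOutOrbit (h : IsParametricPushOut L U Φ Ψ r) {p : X × E} (hp : p.1 ∈ L) :
    IsPushOutOrbit r fun m => (Ψ m p).2 := fun m hm => by
  have hmem : Ψ m p ∈ L ×ˢ closedBall (0 : E) ((m + 1 : ℕ) * r) :=
    ⟨(h.fst_comp m p).symm ▸ hp, mem_closedBall_zero_iff.2 hm⟩
  show dist (Ψ (m + 1) p).2 (Ψ m p).2 ≤ _
  rw [h.comp_succ, comp_apply]
  exact ((le_max_right _ _).trans_eq Prod.dist_eq.symm).trans
    (h.dist_lt (m + 1) m.succ_pos _ hmem).le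

theorem isPushOutSequence (h : IsParametricPushOut L U Φ Ψ r) (hr : 0 < r) {z : X}
    (hz : z ∈ L) :
    IsPushOutSequence (fun j a => (Φ j (z, a)).2) (fun m ζ => (Ψ m (z, ζ)).2) r where
  pos := hr
  differentiable j a :=
    (((h.differentiableOn j).differentiableAt (((h.isOpen j).prod isOpen_univ).mem_nhds
      ⟨h.subset j hz, mem_univ a⟩)).comp a
        ((differentiableAt_const z).prodMk differentiableAt_id)).snd
  bijective j := by
    refine ⟨fun a b hab => ?_, fun w => ?_⟩
    · exact congrArg Prod.snd (h.injOn j ⟨h.subset j hz, mem_univ a⟩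
        ⟨h.subset j hz, mem_univ b⟩ (Prod.ext (by rw [h.fst_apply, h.fst_apply]) hab))
    · obtain ⟨q, -, hq⟩ : (z, w) ∈ Φ j '' (U j ×ˢ univ) :=
        (h.image_eq j).symm ▸ ⟨h.subset j hz, mem_univ w⟩
      have hq1 : q.1 = z := (h.fst_apply j q).symm.trans (congrArg Prod.fst hq)
      refine ⟨q.2, show (Φ j (z, q.2)).2 = w from ?_⟩
      rw [show (z, q.2) = q from Prod.ext hq1.symm rfl, hq]
  dist_le j hj a ha := ((le_max_right _ _).trans_eq Prod.dist_eq.symm).trans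
    (h.dist_lt j hj (z, a) ⟨hz, mem_closedBall_zero_iff.2 ha⟩).le
  comp_zero ζ := by rw [h.comp_zero, id]
  comp_succ m ζ := by
    rw [h.comp_succ, comp_apply]
    congr
    exact Prod.ext (h.fst_comp m _) rfl

theorem tendstoLocallyUniformlyOn [CompleteSpace E] (h : IsParametricPushOut L U Φ Ψ r)
    (hr : 0 < r) :
    TendstoLocallyUniformlyOn Ψ (fun p => (p.1, limUnder atTop fun m => (Ψ m p).2)) atTop
      (L ×ˢ univ ∩ pushOutDomain (fun m p => (Ψ m p).2) r) := by
  have hsnd := tendstoLocallyUniformlyOn_pushOutDomain hr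
    (fun m => (h.continuousOn_comp m).snd) fun p hp => h.isPushOutOrbit hp.1
  have hfst : TendstoLocallyUniformlyOn (fun (_ : ℕ) (p : X × E) => p.1) Prod.fst atTop
      (L ×ˢ univ ∩ pushOutDomain (fun m p => (Ψ m p).2) r) := fun u hu _ _ =>
    ⟨univ, univ_mem, .of_forall fun _ _ _ => refl_mem_uniformity hu⟩
  exact (hfst.prodMk hsnd).congr fun m p _ => Prod.ext (h.fst_comp m p).symm rfl

end IsParametricPushOut

theorem stmt_19_general (N n : ℕ) (L : Set (EuclideanSpace ℂ (Fin N)))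
    (r : ℝ) (hr : 0 < r) :
    ∃ ε : ℕ → ℝ, (∀ k, 0 < ε k) ∧
      ∀ (U : ℕ → Set (EuclideanSpace ℂ (Fin N))),
        (∀ k, IsOpen (U k)) → (∀ k, L ⊆ U k) → (∀ k, U (k + 1) ⊆ U k) →
      ∀ (Φ : ℕ → EuclideanSpace ℂ (Fin N) × EuclideanSpace ℂ (Fin n) →
              EuclideanSpace ℂ (Fin N) × EuclideanSpace ℂ (Fin n)),
        (∀ k p, (Φ k p).1 = p.1) →
        (∀ k z, Φ k (z, (0 : EuclideanSpace ℂ (Fin n))) = (z, 0)) →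
        (∀ k, DifferentiableOn ℂ (Φ k) (U k ×ˢ univ)) →
        (∀ k, Set.InjOn (Φ k) (U k ×ˢ univ)) →
        (∀ k, Φ k '' (U k ×ˢ univ) = U k ×ˢ univ) →
      ∀ (comp : ℕ → EuclideanSpace ℂ (Fin N) × EuclideanSpace ℂ (Fin n) →
               EuclideanSpace ℂ (Fin N) × EuclideanSpace ℂ (Fin n)),
        comp 0 = id → (∀ k, comp (k + 1) = Φ (k + 1) ∘ comp k) →
        (∀ k : ℕ, 1 ≤ k → ∀ p ∈ L ×ˢ closedBall (0 : EuclideanSpace ℂ (Fin n)) ((k : ℝ) * r),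
          dist (Φ k p) p < ε k) →
      ∀ (Ω : Set (EuclideanSpace ℂ (Fin N) × EuclideanSpace ℂ (Fin n))),
        Ω = {p | p.1 ∈ L ∧ ∃ k : ℕ, 1 ≤ k ∧
          comp k p ∈ L ×ˢ closedBall (0 : EuclideanSpace ℂ (Fin n)) ((k : ℝ) * r)} →
      ∃ Φlim : EuclideanSpace ℂ (Fin N) × EuclideanSpace ℂ (Fin n) →
               EuclideanSpace ℂ (Fin N) × EuclideanSpace ℂ (Fin n),
        TendstoLocallyUniformlyOn (fun k => comp k) Φlim Filter.atTop Ω ∧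
        ∀ z ∈ L,
          Set.InjOn (fun ζ => (Φlim (z, ζ)).2) {ζ | (z, ζ) ∈ Ω} ∧
          (fun ζ => (Φlim (z, ζ)).2) '' {ζ | (z, ζ) ∈ Ω} = univ ∧
          DifferentiableOn ℂ (fun ζ => (Φlim (z, ζ)).2) {ζ | (z, ζ) ∈ Ω} := by
  refine ⟨pushOutTol r, pushOutTol_pos hr,
    fun U hU hLU _ Φ hΦ1 _ hΦd hΦi hΦs Ψ hΨ0 hΨS hclose Ω hΩ => ?_⟩
  have h : IsParametricPushOut L U Φ Ψ r := ⟨hU, hLU, hΦ1, hΦd, hΦi, hΦs, hΨ0, hΨS, hclose⟩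
  have hΩ' : Ω = L ×ˢ univ ∩ pushOutDomain (fun m p => (Ψ m p).2) r := by
    ext p
    simp +contextual [hΩ, pushOutDomain, h.fst_comp]
  refine ⟨_, hΩ' ▸ h.tendstoLocallyUniformlyOn hr, fun z hz => ?_⟩
  have hfibre : {ζ | (z, ζ) ∈ Ω} = pushOutDomain (fun m ζ => (Ψ m (z, ζ)).2) r := by
    ext ζ
    simp [hΩ', hz, pushOutDomain]
  have hseq := h.isPushOutSequence hr hz
  rw [hfibre]
  exact ⟨hseq.injOn_limUnder, hseq.image_limUnder, hseq.differentiableOn_limUnder⟩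

/-- The parametric push-out method. Given a compact set `L ⊆ ℂᴺ` and a closed ball
`B = closedBall 0 r ⊆ ℂⁿ`, there is a sequence `ε_k > 0` such that: for any decreasing
neighbourhoods `U_k` of `L` and fibred biholomorphic maps `Φ_k(z,ζ) = (z, φ_k(z,ζ))` of
`U_k × ℂⁿ` fixing the zero section, if each `Φ_k` is `ε_k`-close to the identity on `L × kB`,
then the compositions `Φᵏ = Φ_k ∘ ⋯ ∘ Φ₁` converge locally uniformly on
`Ω = ⋃_k (Φᵏ)⁻¹(L × kB)` to a limit `Φ`, and for each `z ∈ L` the map `Φ(z, ·)` sends the fibre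
`Ω_z` biholomorphically onto `ℂⁿ`. -/
theorem stmt_19 (N n : ℕ) (L : Set (EuclideanSpace ℂ (Fin N))) (hLc : IsCompact L)
    (r : ℝ) (hr : 0 < r) :
    ∃ ε : ℕ → ℝ, (∀ k, 0 < ε k) ∧
      ∀ (U : ℕ → Set (EuclideanSpace ℂ (Fin N))),
        (∀ k, IsOpen (U k)) → (∀ k, L ⊆ U k) → (∀ k, U (k + 1) ⊆ U k) →
      ∀ (Φ : ℕ → EuclideanSpace ℂ (Fin N) × EuclideanSpace ℂ (Fin n) →
              EuclideanSpace ℂ (Fin N) × EuclideanSpace ℂ (Fin n)),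
        (∀ k p, (Φ k p).1 = p.1) →
        (∀ k z, Φ k (z, (0 : EuclideanSpace ℂ (Fin n))) = (z, 0)) →
        (∀ k, DifferentiableOn ℂ (Φ k) (U k ×ˢ univ)) →
        (∀ k, Set.InjOn (Φ k) (U k ×ˢ univ)) →
        (∀ k, Φ k '' (U k ×ˢ univ) = U k ×ˢ univ) →
      ∀ (comp : ℕ → EuclideanSpace ℂ (Fin N) × EuclideanSpace ℂ (Fin n) →
               EuclideanSpace ℂ (Fin N) × EuclideanSpace ℂ (Fin n)),
        comp 0 = id → (∀ k, comp (k + 1) = Φ (k + 1) ∘ comp k) →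
        (∀ k : ℕ, 1 ≤ k → ∀ p ∈ L ×ˢ closedBall (0 : EuclideanSpace ℂ (Fin n)) ((k : ℝ) * r),
          dist (Φ k p) p < ε k) →
      ∀ (Ω : Set (EuclideanSpace ℂ (Fin N) × EuclideanSpace ℂ (Fin n))),
        Ω = {p | p.1 ∈ L ∧ ∃ k : ℕ, 1 ≤ k ∧
          comp k p ∈ L ×ˢ closedBall (0 : EuclideanSpace ℂ (Fin n)) ((k : ℝ) * r)} →
      ∃ Φlim : EuclideanSpace ℂ (Fin N) × EuclideanSpace ℂ (Fin n) →
               EuclideanSpace ℂ (Fin N) × EuclideanSpace ℂ (Fin n),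
        TendstoLocallyUniformlyOn (fun k => comp k) Φlim Filter.atTop Ω ∧
        ∀ z ∈ L,
          Set.InjOn (fun ζ => (Φlim (z, ζ)).2) {ζ | (z, ζ) ∈ Ω} ∧
          (fun ζ => (Φlim (z, ζ)).2) '' {ζ | (z, ζ) ∈ Ω} = univ ∧
          DifferentiableOn ℂ (fun ζ => (Φlim (z, ζ)).2) {ζ | (z, ζ) ∈ Ω} :=
  stmt_19_general N n L r hr
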